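/- arXiv:2009.02714 — 2 statements merged into one kernel-verified Lean document; each statement's English description precedes it below -/
import Mathlib

section
/- Let x be a solution of the delayed consensus inequality on [t₀,∞), let τ ≥ t₀, T > τ, L ∈ ℝ, δ₀ > 0, ε > 0 and M' ≥ 0, and let i,j ∈ [1:n]. Suppose x_l(s) ≤ L for all l ∈ [1:n] and s ∈ [τ−h̄,∞), that x_i(s) ≤ L − δ₀ for all s ∈ [τ−h̄, T], that ∫_τ^T a_{ji}(t) dt ≥ ε, and that ∫_τ^T α_j(t) dt ≤ M' where α_j(t) := Σ_{l=1}^n a_{jl}(t). Then x_j(T) ≤ L − δ₀·ε·e^{−M'}. -/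
/-!
Put `y = L - x_j` and `α = α_j`. Since every delayed value is at most `L`, and the delayed
values of agent `i` are at most `L - δ₀`, the inequality for `x_j` gives
`y' + α y ≥ δ₀ a_{ji}` a.e. on `[τ, T]`. With the integrating factor `E(t) = exp ∫_τ^t α ≥ 1`,
`(E y)' ≥ δ₀ a_{ji}`, so `E(T) y(T) - y(τ) ≥ δ₀ ε`; as `y(τ) ≥ 0` and `E(T) ≤ e^{M'}`, this gives
`y(T) ≥ δ₀ ε e^{-M'}`. Since `y` and `E` are only absolutely continuous, the product rule is
the one for absolutely continuous functions.
-/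

open MeasureTheory Set Filter intervalIntegral

noncomputable section

/-- Standing assumptions on the weight functions: measurable,
`0 ≤ a i j t ≤ ā` on `[0,∞)` and `a i i ≡ 0`. -/
def GoodWeights (n : ℕ) (abar : ℝ) (a : Fin n → Fin n → ℝ → ℝ) : Prop :=
  (∀ i j, Measurable (a i j)) ∧
  (∀ i j, ∀ t : ℝ, 0 ≤ t → 0 ≤ a i j t ∧ a i j t ≤ abar) ∧
  (∀ i, ∀ t : ℝ, 0 ≤ t → a i i t = 0)

/-- Standing assumptions on the delay functions: measurable,
`0 ≤ h i j t ≤ h̄` on `[0,∞)` and `h i i ≡ 0`. -/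
def GoodDelays (n : ℕ) (hbar : ℝ) (h : Fin n → Fin n → ℝ → ℝ) : Prop :=
  (∀ i j, Measurable (h i j)) ∧
  (∀ i j, ∀ t : ℝ, 0 ≤ t → 0 ≤ h i j t ∧ h i j t ≤ hbar) ∧
  (∀ i, ∀ t : ℝ, 0 ≤ t → h i i t = 0)

/-- `x` is bounded on every compact subset of `[t₀ - h̄, ∞)`. -/
def LocBounded (n : ℕ) (t0 hbar : ℝ) (x : ℝ → Fin n → ℝ) : Prop :=
  ∀ T : ℝ, ∃ C : ℝ, ∀ i : Fin n, ∀ s ∈ Icc (t0 - hbar) T, |x s i| ≤ C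

/-- `x` is a solution of the delayed consensus differential *inequality* on `[t₀,∞)`:
it is locally bounded on `[t₀ - h̄, ∞)`, absolutely continuous on `[t₀,∞)` with a.e.
derivative `D` (encoded via the integral representation with locally integrable `D`),
and `D` satisfies the consensus inequality almost everywhere on `[t₀,∞)`. -/
def IsSolIneq (n : ℕ) (a h : Fin n → Fin n → ℝ → ℝ) (hbar t0 : ℝ)
    (x D : ℝ → Fin n → ℝ) : Prop :=
  LocBounded n t0 hbar x ∧
  (∀ i : Fin n, ∀ T : ℝ, IntegrableOn (fun s => D s i) (Icc t0 T)) ∧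
  (∀ i : Fin n, ∀ t : ℝ, t0 ≤ t → x t i = x t0 i + ∫ s in t0..t, D s i) ∧
  (∀ᵐ t : ℝ ∂volume, t0 ≤ t → ∀ i : Fin n,
    D t i ≤ ∑ j : Fin n, a i j t * (x (t - h i j t) j - x t i))

/-- `x` is a solution of the delayed consensus *equation* on `[t₀,∞)`. -/
def IsSolEq (n : ℕ) (a h : Fin n → Fin n → ℝ → ℝ) (hbar t0 : ℝ)
    (x D : ℝ → Fin n → ℝ) : Prop :=
  LocBounded n t0 hbar x ∧
  (∀ i : Fin n, ∀ T : ℝ, IntegrableOn (fun s => D s i) (Icc t0 T)) ∧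
  (∀ i : Fin n, ∀ t : ℝ, t0 ≤ t → x t i = x t0 i + ∫ s in t0..t, D s i) ∧
  (∀ᵐ t : ℝ ∂volume, t0 ≤ t → ∀ i : Fin n,
    D t i = ∑ j : Fin n, a i j t * (x (t - h i j t) j - x t i))

/-- `Λ(t) = max_i sup_{s ∈ [t-h̄, t]} x_i(s)`. -/
def Lam (n : ℕ) (hbar : ℝ) (x : ℝ → Fin n → ℝ) (t : ℝ) : ℝ :=
  ⨆ i : Fin n, sSup ((fun s => x s i) '' Icc (t - hbar) t)

/-- `λ(t) = min_i inf_{s ∈ [t-h̄, t]} x_i(s)`. -/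
def lam (n : ℕ) (hbar : ℝ) (x : ℝ → Fin n → ℝ) (t : ℝ) : ℝ :=
  ⨅ i : Fin n, sInf ((fun s => x s i) '' Icc (t - hbar) t)

/-- Non-instantaneous type-symmetry of the weight matrix with sequence `tp` and
constant `K` (Definition 1). -/
def NonInstTypeSymm (n : ℕ) (a : Fin n → Fin n → ℝ → ℝ) (tp : ℕ → ℝ) (K : ℝ) : Prop :=
  tp 0 = 0 ∧ StrictMono tp ∧ Tendsto tp atTop atTop ∧ 1 ≤ K ∧
  ∀ p : ℕ, ∀ i j : Fin n,
    K⁻¹ * ∫ t in tp p..tp (p + 1), a j i t ≤ (∫ t in tp p..tp (p + 1), a i j t) ∧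
    (∫ t in tp p..tp (p + 1), a i j t) ≤ K * ∫ t in tp p..tp (p + 1), a j i t

/-- The persistent graph `G_∞`, whose arcs are the pairs `(j,i)` with
`∫_0^∞ a_{ij} = ∞` (i.e. `a i j` is not integrable on `[0,∞)`), is connected:
the symmetric reflexive-transitive closure of the arc relation relates any two nodes. -/
def PersGraphConnected (n : ℕ) (a : Fin n → Fin n → ℝ → ℝ) : Prop :=
  ∀ u v : Fin n, Relation.ReflTransGen
    (fun p q => ¬ IntegrableOn (a q p) (Ici 0) ∨ ¬ IntegrableOn (a p q) (Ici 0)) u v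

/-- The weight matrix is repeatedly strongly connected with sequence `tp` and
constant `ε` (Definition 2): on each `[t_p, t_{p+1}]`, the graph whose arcs `(j,i)`
satisfy `∫_{t_p}^{t_{p+1}} a_{ij} ≥ ε` is strongly connected. -/
def RepeatedlyStronglyConnected (n : ℕ) (a : Fin n → Fin n → ℝ → ℝ)
    (tp : ℕ → ℝ) (ε : ℝ) : Prop :=
  tp 0 = 0 ∧ StrictMono tp ∧ Tendsto tp atTop atTop ∧ 0 < ε ∧
  ∀ p : ℕ, ∀ u v : Fin n, Relation.ReflTransGen
    (fun i j => ε ≤ ∫ t in tp p..tp (p + 1), a j i t) u v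

/-- The quantity `M = sup_{i,j,p} ∫_{t_p}^{t_{p+1}} a_{ij}` is finite, bounded by `M`. -/
def MBound (n : ℕ) (a : Fin n → Fin n → ℝ → ℝ) (tp : ℕ → ℝ) (M : ℝ) : Prop :=
  ∀ p : ℕ, ∀ i j : Fin n, (∫ t in tp p..tp (p + 1), a i j t) ≤ M

end

open Real

theorem LipschitzOnWith.comp_absolutelyContinuousOnInterval {X Y : Type*}
    [PseudoMetricSpace X] [PseudoMetricSpace Y] {f : ℝ → X} {g : X → Y} {K : NNReal} {s : Set X}
    {a b : ℝ} (hg : LipschitzOnWith K g s) (hf : AbsolutelyContinuousOnInterval f a b)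
    (hfs : MapsTo f (uIcc a b) s) :
    AbsolutelyContinuousOnInterval (g ∘ f) a b := by
  unfold AbsolutelyContinuousOnInterval at hf ⊢
  refine squeeze_zero' (.of_forall fun _ ↦ Finset.sum_nonneg fun _ _ ↦ dist_nonneg) ?_
    (by simpa using hf.const_mul (K : ℝ))
  rw [eventually_inf_principal]
  filter_upwards with ⟨n, I⟩ hnI
  rw [Finset.mul_sum]
  gcongr with i hi
  exact hg.dist_le_mul _ (hfs (hnI.1 i hi).1) _ (hfs (hnI.1 i hi).2)

theorem ContDiff.comp_absolutelyContinuousOnInterval {E : Type*} [NormedAddCommGroup E]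
    [NormedSpace ℝ E] {f : ℝ → ℝ} {g : ℝ → E} {a b : ℝ} (hg : ContDiff ℝ 1 g)
    (hf : AbsolutelyContinuousOnInterval f a b) :
    AbsolutelyContinuousOnInterval (g ∘ f) a b := by
  obtain ⟨C, hC⟩ := hf.exists_bound
  obtain ⟨K, hK⟩ := hg.contDiffOn.exists_lipschitzOnWith one_ne_zero (convex_Icc (-C) C)
    isCompact_Icc
  exact hK.comp_absolutelyContinuousOnInterval hf fun x hx ↦ abs_le.1 (hC x hx)

theorem integral_le_exp_integral_mul_sub {α β y y' : ℝ → ℝ} {a b : ℝ} (hab : a ≤ b)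
    (hα : IntervalIntegrable α volume a b) (hβ : IntervalIntegrable β volume a b)
    (hy' : IntervalIntegrable y' volume a b)
    (hy : ∀ t ∈ Icc a b, y t = y a + ∫ s in a..t, y' s)
    (hβy : ∀ᵐ t, t ∈ Icc a b → β t ≤ exp (∫ s in a..t, α s) * (y' t + α t * y t)) :
    ∫ t in a..b, β t ≤ exp (∫ s in a..b, α s) * y b - y a := by
  set E := fun t ↦ exp (∫ s in a..t, α s)
  set Y := fun t ↦ y a + ∫ s in a..t, y' s
  have hE : AbsolutelyContinuousOnInterval E a b :=
    contDiff_exp.comp_absolutelyContinuousOnInterval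
      (hα.absolutelyContinuousOnInterval_intervalIntegral left_mem_uIcc)
  have hY : AbsolutelyContinuousOnInterval Y a b :=
    (contDiff_const.add contDiff_id).comp_absolutelyContinuousOnInterval
      (hy'.absolutelyContinuousOnInterval_intervalIntegral left_mem_uIcc)
  have hEY := hE.integral_deriv_mul_eq_sub hY
  simp only [E, Y, ← hy b ⟨hab, le_rfl⟩, integral_same, exp_zero, add_zero, one_mul] at hEY
  rw [← hEY]
  refine integral_mono_ae_restrict hab hβ ((hE.intervalIntegrable_deriv.mul_continuousOn
    hY.continuousOn).add (hY.intervalIntegrable_deriv.continuousOn_mul hE.continuousOn)) ?_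
  rw [EventuallyLE, ae_restrict_iff' measurableSet_Icc]
  filter_upwards [hβy, hα.ae_hasDerivAt_integral, hy'.ae_hasDerivAt_integral]
    with t hβt hαt hy't ht
  have ht' : t ∈ uIcc a b := Icc_subset_uIcc ht
  rw [(hαt ht' a left_mem_uIcc).exp.deriv, ((hy't ht' a left_mem_uIcc).const_add _).deriv]
  calc β t ≤ _ := hβt ht
    _ = _ := by rw [hy t ht]; ring

theorem sum_mul_sub_le_sum_mul_sub_sub {ι : Type*} [Fintype ι] {w v : ι → ℝ} {L c δ : ℝ} (i : ι)
    (hw : ∀ l, 0 ≤ w l) (hv : ∀ l, v l ≤ L) (hvi : v i ≤ L - δ) :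
    ∑ l, w l * (v l - c) ≤ (∑ l, w l) * (L - c) - δ * w i := by
  have hgap : δ * w i ≤ ∑ l, w l * (L - v l) :=
    (by nlinarith [hw i] : δ * w i ≤ w i * (L - v i)).trans
      (Finset.single_le_sum (fun l _ ↦ mul_nonneg (hw l) (sub_nonneg.2 (hv l)))
        (Finset.mem_univ i))
  have hsplit : ∑ l, w l * (v l - c) = (∑ l, w l) * (L - c) - ∑ l, w l * (L - v l) := by
    rw [Finset.sum_mul, ← Finset.sum_sub_distrib]
    exact Finset.sum_congr rfl fun l _ ↦ by ring
  linarith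

theorem GoodWeights.intervalIntegrable {n : ℕ} {abar : ℝ} {a : Fin n → Fin n → ℝ → ℝ}
    (ha : GoodWeights n abar a) (i j : Fin n) {p q : ℝ} (hp : 0 ≤ p) (hq : 0 ≤ q) :
    IntervalIntegrable (a i j) volume p q := by
  refine (intervalIntegrable_const (c := abar)).mono_fun' (ha.1 i j).aestronglyMeasurable
    (ae_restrict_of_forall_mem measurableSet_uIoc fun t ht ↦ ?_)
  have ht0 : 0 ≤ t := (le_min hp hq).trans ht.1.le
  exact (Real.norm_of_nonneg (ha.2.1 i j t ht0).1).trans_le (ha.2.1 i j t ht0).2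

namespace IsSolIneq

variable {n : ℕ} {a h : Fin n → Fin n → ℝ → ℝ} {hbar t0 : ℝ} {x D : ℝ → Fin n → ℝ}

theorem intervalIntegrable (hx : IsSolIneq n a h hbar t0 x D) (i : Fin n) {p q : ℝ}
    (hp : t0 ≤ p) (hq : t0 ≤ q) : IntervalIntegrable (fun s ↦ D s i) volume p q :=
  ((hx.2.1 i (max p q)).mono_set fun _ hs ↦ ⟨(le_min hp hq).trans hs.1, hs.2⟩).intervalIntegrable

theorem sub_eq_integral (hx : IsSolIneq n a h hbar t0 x D) (i : Fin n) {p q : ℝ}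
    (hp : t0 ≤ p) (hq : t0 ≤ q) : x q i - x p i = ∫ s in p..q, D s i := by
  rw [hx.2.2.1 i q hq, hx.2.2.1 i p hp, ← integral_interval_sub_left
    (hx.intervalIntegrable i le_rfl hq) (hx.intervalIntegrable i le_rfl hp)]
  ring

end IsSolIneq

theorem sum_delayed_mul_sub_le {n : ℕ} {abar hbar τ T L δ₀ t : ℝ}
    {a h : Fin n → Fin n → ℝ → ℝ} {x : ℝ → Fin n → ℝ} {i j : Fin n}
    (ha : GoodWeights n abar a) (hh : GoodDelays n hbar h) (ht0 : 0 ≤ t) (ht : t ∈ Icc τ T)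
    (hbound : ∀ l : Fin n, ∀ s ∈ Ici (τ - hbar), x s l ≤ L)
    (hiL : ∀ s ∈ Icc (τ - hbar) T, x s i ≤ L - δ₀) :
    ∑ l, a j l t * (x (t - h j l t) l - x t j) ≤
      (∑ l, a j l t) * (L - x t j) - δ₀ * a j i t :=
  sum_mul_sub_le_sum_mul_sub_sub i (fun l ↦ (ha.2.1 j l t ht0).1)
    (fun l ↦ hbound l _ (by simp; linarith [(hh.2.1 j l t ht0).2, ht.1]))
    (hiL _ ⟨by linarith [(hh.2.1 j i t ht0).2, ht.1], by linarith [(hh.2.1 j i t ht0).1, ht.2]⟩)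

theorem stmt13_general (n : ℕ) (abar hbar : ℝ) (hhbar : 0 ≤ hbar)
    (a h : Fin n → Fin n → ℝ → ℝ)
    (ha : GoodWeights n abar a) (hh : GoodDelays n hbar h)
    (t0 : ℝ) (ht0 : 0 ≤ t0) (x D : ℝ → Fin n → ℝ)
    (hx : IsSolIneq n a h hbar t0 x D)
    (τ T L δ₀ ε M' : ℝ) (hτ : t0 ≤ τ) (hT : τ < T) (hδ₀ : 0 < δ₀)
    (i j : Fin n)
    (hbound : ∀ l : Fin n, ∀ s ∈ Ici (τ - hbar), x s l ≤ L)
    (hiL : ∀ s ∈ Icc (τ - hbar) T, x s i ≤ L - δ₀)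
    (hji : ε ≤ ∫ t in τ..T, a j i t)
    (hα : (∫ t in τ..T, ∑ l : Fin n, a j l t) ≤ M') :
    x T j ≤ L - δ₀ * ε * Real.exp (-M') := by
  have hτ0 : 0 ≤ τ := ht0.trans hτ
  have hT0 : 0 ≤ T := hτ0.trans hT.le
  have hαint : IntervalIntegrable (fun t ↦ ∑ l, a j l t) volume τ T := by
    simpa only [Finset.sum_fn] using
      IntervalIntegrable.sum Finset.univ fun l _ ↦ ha.intervalIntegrable j l hτ0 hT0
  have hineq : ∀ᵐ t, t ∈ Icc τ T → δ₀ * a j i t ≤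
      exp (∫ s in τ..t, ∑ l, a j l s) * (-D t j + (∑ l, a j l t) * (L - x t j)) := by
    filter_upwards [hx.2.2.2] with t hD ht
    have ht0' : 0 ≤ t := hτ0.trans ht.1
    have hdrift := (hD (hτ.trans ht.1) j).trans (sum_delayed_mul_sub_le ha hh ht0' ht hbound hiL)
    have hfactor : 1 ≤ exp (∫ s in τ..t, ∑ l, a j l s) :=
      one_le_exp (integral_nonneg ht.1 fun s hs ↦
        Finset.sum_nonneg fun l _ ↦ (ha.2.1 j l s (hτ0.trans hs.1)).1)
    have hgap : 0 ≤ δ₀ * a j i t := mul_nonneg hδ₀.le (ha.2.1 j i t ht0').1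
    calc δ₀ * a j i t ≤ -D t j + (∑ l, a j l t) * (L - x t j) := by linarith
      _ ≤ _ := le_mul_of_one_le_left (by linarith) hfactor
  have hgain := integral_le_exp_integral_mul_sub (y := fun t ↦ L - x t j)
    (y' := fun t ↦ -D t j) hT.le hαint ((ha.intervalIntegrable j i hτ0 hT0).const_mul δ₀)
    (hx.intervalIntegrable j hτ (hτ.trans hT.le)).neg
    (fun t ht ↦ by
      rw [intervalIntegral.integral_neg, ← hx.sub_eq_integral j hτ (hτ.trans ht.1)]; ring) hineq
  have hxτ : x τ j ≤ L := hbound j τ (by simp [hhbar])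
  have hxT : x T j ≤ L := hbound j T (by simp; linarith)
  have hmain : δ₀ * ε ≤ exp M' * (L - x T j) := calc
    δ₀ * ε ≤ ∫ t in τ..T, δ₀ * a j i t := by
      rw [intervalIntegral.integral_const_mul]; gcongr
    _ ≤ exp (∫ t in τ..T, ∑ l, a j l t) * (L - x T j) - (L - x τ j) := hgain
    _ ≤ exp (∫ t in τ..T, ∑ l, a j l t) * (L - x T j) := by linarith
    _ ≤ exp M' * (L - x T j) := by gcongr
  rw [exp_neg, ← div_eq_mul_inv]
  linarith [(div_le_iff₀ (exp_pos M')).2 (hmain.trans_eq (mul_comm _ _))]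

theorem stmt13 (n : ℕ) (hn : 1 ≤ n) (abar hbar : ℝ) (habar : 0 ≤ abar) (hhbar : 0 ≤ hbar)
    (a h : Fin n → Fin n → ℝ → ℝ)
    (ha : GoodWeights n abar a) (hh : GoodDelays n hbar h)
    (t0 : ℝ) (ht0 : 0 ≤ t0) (x D : ℝ → Fin n → ℝ)
    (hx : IsSolIneq n a h hbar t0 x D)
    (τ T L δ₀ ε M' : ℝ) (hτ : t0 ≤ τ) (hT : τ < T) (hδ₀ : 0 < δ₀) (hε : 0 < ε)
    (hM' : 0 ≤ M') (i j : Fin n)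
    (hbound : ∀ l : Fin n, ∀ s ∈ Ici (τ - hbar), x s l ≤ L)
    (hiL : ∀ s ∈ Icc (τ - hbar) T, x s i ≤ L - δ₀)
    (hji : ε ≤ ∫ t in τ..T, a j i t)
    (hα : (∫ t in τ..T, ∑ l : Fin n, a j l t) ≤ M') :
    x T j ≤ L - δ₀ * ε * Real.exp (-M') :=
  stmt13_general n abar hbar hhbar a h ha hh t0 ht0 x D hx τ T L δ₀ ε M' hτ hT hδ₀ i j hbound hiL
    hji hα
end

section
/- Let x be a solution of the delayed consensus equation on [t₀,∞). Then x is uniformly bounded in terms of its initial data: for every i ∈ [1:n] and every t ≥ t₀, min_{j∈[1:n]} inf_{s∈[t₀−h̄,t₀]} x_j(s) ≤ x_i(t) ≤ max_{j∈[1:n]} sup_{s∈[t₀−h̄,t₀]} x_j(s). -/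
/-!
Fix a level `L` strictly above all initial data. If some `x_k` first reached `L` at a time `τ`,
then all delayed values up to `τ` are at most `L`, so `w = L - x_k ≥ 0` satisfies
`ẇ ≥ -n ā w` almost everywhere, i.e. `w σ ≤ ∫_σ^τ n ā w` since `w τ = 0`. On an interval
`[t₁, τ]` with `n ā (τ - t₁) < 1` this forces `w ≤ 0` (compare `w` with its maximum),
contradicting `x_k t₁ < L`. The lower bound is the upper bound for `-x`, which solves the
same equation.
-/

open MeasureTheory Set Filter intervalIntegral

noncomputable section

theorem ContinuousOn.exists_first_eq {g : ℝ → ℝ} {a b L : ℝ} (hab : a ≤ b)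
    (hg : ContinuousOn g (Icc a b)) (ha : g a < L) (hb : L ≤ g b) :
    ∃ τ ∈ Ioc a b, g τ = L ∧ ∀ σ ∈ Ico a τ, g σ < L := by
  set S := Icc a b ∩ g ⁻¹' Ici L
  have hS : IsClosed S := hg.preimage_isClosed_of_isClosed isClosed_Icc isClosed_Ici
  have hSbdd : BddBelow S := bddBelow_Icc.mono inter_subset_left
  have hτS : sInf S ∈ S := hS.csInf_mem ⟨b, ⟨hab, le_rfl⟩, hb⟩ hSbdd
  have hbefore : ∀ σ ∈ Ico a (sInf S), g σ < L := fun σ hσ => by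
    by_contra! hle
    exact (csInf_le hSbdd ⟨⟨hσ.1, hσ.2.le.trans hτS.1.2⟩, hle⟩).not_gt hσ.2
  obtain ⟨σ, hσ, hgσ⟩ := intermediate_value_Icc hτS.1.1 (hg.mono (Icc_subset_Icc le_rfl hτS.1.2))
    ⟨ha.le, hτS.2⟩
  have hστ : σ = sInf S := hσ.2.eq_of_not_lt fun hlt => (hbefore σ ⟨hσ.1, hlt⟩).ne hgσ
  refine ⟨sInf S, ⟨hτS.1.1.lt_of_ne fun h => ha.not_ge (h ▸ hτS.2), hτS.1.2⟩, hστ ▸ hgσ,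
    hbefore⟩

theorem nonpos_of_le_integral_const_mul {w : ℝ → ℝ} {c u v : ℝ} (hc : 0 ≤ c)
    (hcuv : c * (v - u) < 1) (hw : ContinuousOn w (Icc u v))
    (hle : ∀ τ ∈ Icc u v, w τ ≤ ∫ s in τ..v, c * w s) : ∀ τ ∈ Icc u v, w τ ≤ 0 := by
  intro τ hτ
  obtain ⟨τm, hτm, hmax⟩ := isCompact_Icc.exists_isMaxOn ⟨τ, hτ⟩ hw
  by_contra! hpos
  have hWpos : 0 < w τm := hpos.trans_le (hmax hτ)
  have hint : IntervalIntegrable (fun s => c * w s) volume τm v :=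
    (continuousOn_const.mul (hw.mono (Icc_subset_Icc hτm.1 le_rfl))).intervalIntegrable_of_Icc
      hτm.2
  have : w τm ≤ c * (v - u) * w τm := calc
    w τm ≤ ∫ s in τm..v, c * w s := hle τm hτm
    _ ≤ ∫ _ in τm..v, c * w τm :=
      intervalIntegral.integral_mono_on hτm.2 hint intervalIntegrable_const fun s hs =>
        mul_le_mul_of_nonneg_left (hmax ⟨hτm.1.trans hs.1, hs.2⟩) hc
    _ = c * (v - τm) * w τm := by simp only [intervalIntegral.integral_const, smul_eq_mul]; ring
    _ ≤ c * (v - u) * w τm := by gcongr; exact hτm.1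
  nlinarith

section Consensus

variable {n : ℕ} {a h : Fin n → Fin n → ℝ → ℝ} {abar hbar t0 : ℝ} {x D : ℝ → Fin n → ℝ}

theorem LocBounded.isBounded_image (hx : LocBounded n t0 hbar x) (j : Fin n) (T : ℝ) :
    Bornology.IsBounded ((fun s => x s j) '' Icc (t0 - hbar) T) := by
  obtain ⟨C, hC⟩ := hx T
  exact isBounded_iff_forall_norm_le.2 ⟨C, by rintro _ ⟨s, hs, rfl⟩; exact hC j s hs⟩

theorem le_Lam (hx : LocBounded n t0 hbar x) {σ : ℝ} (hσ : σ ∈ Icc (t0 - hbar) t0) (j : Fin n) :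
    x σ j ≤ Lam n hbar x t0 :=
  (le_csSup ((hx.isBounded_image j t0).bddAbove) ⟨σ, hσ, rfl⟩).trans <|
    le_ciSup (f := fun i => sSup ((fun s => x s i) '' Icc (t0 - hbar) t0))
      (Set.finite_range _).bddAbove j

theorem lam_le (hx : LocBounded n t0 hbar x) {σ : ℝ} (hσ : σ ∈ Icc (t0 - hbar) t0) (j : Fin n) :
    lam n hbar x t0 ≤ x σ j :=
  (ciInf_le (f := fun i => sInf ((fun s => x s i) '' Icc (t0 - hbar) t0))
    (Set.finite_range _).bddBelow j).trans <|
    csInf_le ((hx.isBounded_image j t0).bddBelow) ⟨σ, hσ, rfl⟩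

theorem IsSolEq.isSolIneq (hx : IsSolEq n a h hbar t0 x D) : IsSolIneq n a h hbar t0 x D :=
  ⟨hx.1, hx.2.1, hx.2.2.1, hx.2.2.2.mono fun _ hs ht i => (hs ht i).le⟩

theorem IsSolEq.neg (hx : IsSolEq n a h hbar t0 x D) : IsSolEq n a h hbar t0 (-x) (-D) := by
  obtain ⟨hbdd, hDint, hrep, hode⟩ := hx
  refine ⟨fun T => ?_, fun i T => (hDint i T).neg, fun i t ht => ?_, ?_⟩
  · obtain ⟨C, hC⟩ := hbdd T
    exact ⟨C, fun i s hs => by simpa using hC i s hs⟩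
  · simp only [Pi.neg_apply, intervalIntegral.integral_neg, hrep i t ht, neg_add]
  · filter_upwards [hode] with s hs ht i
    simp only [Pi.neg_apply, hs ht i, ← Finset.sum_neg_distrib]
    exact Finset.sum_congr rfl fun j _ => by ring

namespace IsSolIneq

variable (hx : IsSolIneq n a h hbar t0 x D)
include hx

theorem intervalIntegrable_s15 (j : Fin n) {u v : ℝ} (hu : t0 ≤ u) (huv : u ≤ v) :
    IntervalIntegrable (fun s => D s j) volume u v :=
  (intervalIntegrable_iff_integrableOn_Icc_of_le huv).2
    ((hx.2.1 j v).mono_set (Icc_subset_Icc hu le_rfl))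

theorem sub_eq_integral_s15 (j : Fin n) {u v : ℝ} (hu : t0 ≤ u) (huv : u ≤ v) :
    x v j - x u j = ∫ s in u..v, D s j := by
  rw [hx.2.2.1 j v (hu.trans huv), hx.2.2.1 j u hu, add_sub_add_left_eq_sub,
    intervalIntegral.integral_interval_sub_left (hx.intervalIntegrable_s15 j le_rfl (hu.trans huv))
      (hx.intervalIntegrable_s15 j le_rfl hu)]

theorem continuousOn (j : Fin n) (T : ℝ) : ContinuousOn (fun s => x s j) (Icc t0 T) :=
  ((continuousOn_const (c := x t0 j)).add (continuousOn_primitive (hx.2.1 j T))).congr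
    fun s hs => by
      rw [hx.2.2.1 j s hs.1, intervalIntegral.integral_of_le hs.1, Pi.add_apply]

theorem ae_le_mul_sub (ha : GoodWeights n abar a) (hh : GoodDelays n hbar h) (ht0 : 0 ≤ t0)
    {L τ : ℝ} (hL : ∀ j, ∀ σ ∈ Icc (t0 - hbar) τ, x σ j ≤ L) (k : Fin n) :
    ∀ᵐ s, s ∈ Icc t0 τ → D s k ≤ n * abar * (L - x s k) := by
  filter_upwards [hx.2.2.2] with s hode hs
  have hs0 : 0 ≤ s := ht0.trans hs.1
  have hhbar : 0 ≤ hbar := (hh.2.1 k k s hs0).1.trans (hh.2.1 k k s hs0).2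
  have hgap : 0 ≤ L - x s k := sub_nonneg.2 (hL k s ⟨by linarith [hs.1], hs.2⟩)
  calc D s k ≤ ∑ j, a k j s * (x (s - h k j s) j - x s k) := hode hs.1 k
    _ ≤ ∑ _j : Fin n, abar * (L - x s k) := Finset.sum_le_sum fun j _ => by
      obtain ⟨ha0, hale⟩ := ha.2.1 k j s hs0
      obtain ⟨hh0, hhle⟩ := hh.2.1 k j s hs0
      have hdelay : x (s - h k j s) j ≤ L :=
        hL j _ ⟨by linarith [hs.1], by linarith [hs.2]⟩
      calc a k j s * (x (s - h k j s) j - x s k) ≤ a k j s * (L - x s k) := by gcongr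
        _ ≤ abar * (L - x s k) := by gcongr
    _ = n * abar * (L - x s k) := by simp [mul_assoc]

theorem sub_le_integral (ha : GoodWeights n abar a) (hh : GoodDelays n hbar h) (ht0 : 0 ≤ t0)
    {L τ : ℝ} (hL : ∀ j, ∀ σ ∈ Icc (t0 - hbar) τ, x σ j ≤ L) (k : Fin n) {σ : ℝ}
    (hσ0 : t0 ≤ σ) (hστ : σ ≤ τ) :
    x τ k - x σ k ≤ ∫ s in σ..τ, n * abar * (L - x s k) := by
  rw [hx.sub_eq_integral_s15 k hσ0 hστ]
  refine intervalIntegral.integral_mono_ae_restrict hστ (hx.intervalIntegrable_s15 k hσ0 hστ)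
    ((continuousOn_const.mul (continuousOn_const.sub
      ((hx.continuousOn k τ).mono (Icc_subset_Icc hσ0 le_rfl)))).intervalIntegrable_of_Icc hστ) ?_
  filter_upwards [ae_restrict_mem measurableSet_Icc,
    ae_restrict_of_ae (hx.ae_le_mul_sub ha hh ht0 hL k)] with s hs hD
  exact hD ⟨hσ0.trans hs.1, hs.2⟩

theorem lt_of_history_lt (habar : 0 ≤ abar) (ha : GoodWeights n abar a)
    (hh : GoodDelays n hbar h) (ht0 : 0 ≤ t0) {L : ℝ}
    (hL : ∀ j, ∀ σ ∈ Icc (t0 - hbar) t0, x σ j < L) (i : Fin n) {t : ℝ} (ht : t0 ≤ t) :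
    x t i < L := by
  by_contra! hge
  have hhbar : 0 ≤ hbar := (hh.2.1 i i t0 ht0).1.trans (hh.2.1 i i t0 ht0).2
  set g := fun σ => Finset.univ.sup' ⟨i, Finset.mem_univ i⟩ fun j => x σ j
  have hg : ContinuousOn g (Icc t0 t) :=
    ContinuousOn.finset_sup'_apply _ fun j _ => hx.continuousOn j t
  have hgt0 : g t0 < L :=
    (Finset.sup'_lt_iff _).2 fun j _ => hL j t0 ⟨by linarith, le_rfl⟩
  obtain ⟨τ, hτ, hgτ, hbefore⟩ :=
    hg.exists_first_eq ht hgt0 (hge.trans (Finset.le_sup' (fun j => x t j) (Finset.mem_univ i)))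
  obtain ⟨k, -, hk⟩ := Finset.exists_mem_eq_sup' ⟨i, Finset.mem_univ i⟩ fun j => x τ j
  have hkL : x τ k = L := hk ▸ hgτ
  have hbelow : ∀ j, ∀ σ ∈ Icc (t0 - hbar) τ, x σ j ≤ L := by
    intro j σ hσ
    rcases lt_or_ge σ t0 with hσ0 | hσ0
    · exact (hL j σ ⟨hσ.1, hσ0.le⟩).le
    rcases hσ.2.lt_or_eq with hστ | rfl
    · exact ((Finset.sup'_lt_iff _).1 (hbefore σ ⟨hσ0, hστ⟩) j (Finset.mem_univ j)).le
    · exact hgτ ▸ Finset.le_sup' (fun j => x σ j) (Finset.mem_univ j)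
  set c : ℝ := n * abar
  have hc : 0 ≤ c := by positivity
  have hw : ContinuousOn (fun s => L - x s k) (Icc t0 τ) :=
    continuousOn_const.sub (hx.continuousOn k τ)
  set t1 := max t0 (τ - (c + 1)⁻¹)
  have ht1τ : t1 < τ := max_lt hτ.1 (sub_lt_self τ (by positivity))
  have hct1 : c * (τ - t1) < 1 := calc
    c * (τ - t1) ≤ c * (c + 1)⁻¹ := by gcongr; linarith [le_max_right t0 (τ - (c + 1)⁻¹)]
    _ < 1 := by rw [mul_inv_lt_iff₀ (by positivity)]; linarith
  have hgap : ∀ σ ∈ Icc t1 τ, L - x σ k ≤ ∫ s in σ..τ, c * (L - x s k) := fun σ hσ => by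
    have := hx.sub_le_integral ha hh ht0 hbelow k ((le_max_left _ _).trans hσ.1) hσ.2
    rwa [hkL] at this
  have hgap_t1 := nonpos_of_le_integral_const_mul hc hct1
    (hw.mono (Icc_subset_Icc (le_max_left _ _) le_rfl)) hgap t1 ⟨le_rfl, ht1τ.le⟩
  have hbelow_t1 := (Finset.sup'_lt_iff _).1 (hbefore t1 ⟨le_max_left _ _, ht1τ⟩) k
    (Finset.mem_univ k)
  linarith

theorem le_of_history_le (habar : 0 ≤ abar) (ha : GoodWeights n abar a)
    (hh : GoodDelays n hbar h) (ht0 : 0 ≤ t0) {L : ℝ}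
    (hL : ∀ j, ∀ σ ∈ Icc (t0 - hbar) t0, x σ j ≤ L) (i : Fin n) {t : ℝ} (ht : t0 ≤ t) :
    x t i ≤ L :=
  le_of_forall_pos_lt_add fun _ hε => hx.lt_of_history_lt habar ha hh ht0
    (fun j σ hσ => (hL j σ hσ).trans_lt (lt_add_of_pos_right L hε)) i ht

end IsSolIneq

end Consensus

theorem stmt15_general (n : ℕ) (abar hbar : ℝ) (habar : 0 ≤ abar)
    (a h : Fin n → Fin n → ℝ → ℝ)
    (ha : GoodWeights n abar a) (hh : GoodDelays n hbar h)
    (t0 : ℝ) (ht0 : 0 ≤ t0) (x D : ℝ → Fin n → ℝ)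
    (hx : IsSolEq n a h hbar t0 x D) :
    ∀ i : Fin n, ∀ t : ℝ, t0 ≤ t →
      lam n hbar x t0 ≤ x t i ∧ x t i ≤ Lam n hbar x t0 := by
  intro i t ht
  have hlower := hx.neg.isSolIneq.le_of_history_le habar ha hh ht0
    (fun j σ hσ => neg_le_neg (lam_le hx.1 hσ j)) i ht
  exact ⟨neg_le_neg_iff.1 hlower,
    hx.isSolIneq.le_of_history_le habar ha hh ht0 (fun j σ hσ => le_Lam hx.1 hσ j) i ht⟩

theorem stmt15 (n : ℕ) (hn : 1 ≤ n) (abar hbar : ℝ) (habar : 0 ≤ abar) (hhbar : 0 ≤ hbar)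
    (a h : Fin n → Fin n → ℝ → ℝ)
    (ha : GoodWeights n abar a) (hh : GoodDelays n hbar h)
    (t0 : ℝ) (ht0 : 0 ≤ t0) (x D : ℝ → Fin n → ℝ)
    (hx : IsSolEq n a h hbar t0 x D) :
    ∀ i : Fin n, ∀ t : ℝ, t0 ≤ t →
      lam n hbar x t0 ≤ x t i ∧ x t i ≤ Lam n hbar x t0 :=
  stmt15_general n abar hbar habar a h ha hh t0 ht0 x D hx
end
end
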